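/- arXiv:2605.11473 — 2 statements merged into one kernel-verified Lean document; each statement's English description precedes it below -/
import Mathlib

section
/- Fix α > 0 with α ≠ 1 and K ≥ 1. Suppose that for every choice of linearly independent g_1,...,g_K ∈ R^d and every c ∈ R^K_{>0}, whenever w solves (Gw)_i = w_i^{-1/α} componentwise with w_i > 0, the vector w̃ defined by w̃_i = w_i/c_i solves the analogous system for the rescaled Gram matrix G̃ = diag(c) G diag(c). Then c_i^{1-1/α} = 1 must hold for all c_i > 0, which is a contradiction; hence exact scale invariance of the α-fairness solution under arbitrary positive rescalings fails for every α ≠ 1. -/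
/-!
Rescaling gives `(G̃ w̃)ᵢ = cᵢ (G w)ᵢ = cᵢ wᵢ^(-1/α)`, whereas the right-hand side becomes
`(wᵢ / cᵢ)^(-1/α) = cᵢ^(1/α) wᵢ^(-1/α)`; invariance therefore forces `cᵢ^(1 - 1/α) = 1`.
An orthonormal family with `w = 1` is a solution, and `c = 2` then gives `α = 1`.
-/

open Matrix

section RescaledGram

variable {ι E : Type*} [Fintype ι] [NormedAddCommGroup E] [InnerProductSpace ℝ E]

lemma gram_mulVec_of_orthonormal {g : ι → E} (hg : Orthonormal ℝ g) (w : ι → ℝ) :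
    gram ℝ g *ᵥ w = w := by
  classical
  rw [gram_eq_one_iff_orthonormal.mpr hg, one_mulVec]

lemma gram_smul_mulVec_div (g : ι → E) {c : ι → ℝ} (hc : ∀ i, c i ≠ 0) (w : ι → ℝ) (i : ι) :
    (gram ℝ (fun j => c j • g j) *ᵥ fun j => w j / c j) i = c i * (gram ℝ g *ᵥ w) i := by
  simp only [mulVec, dotProduct, gram_apply, real_inner_smul_left, real_inner_smul_right,
    Finset.mul_sum]
  refine Finset.sum_congr rfl fun j _ => ?_
  field_simp [hc j]

end RescaledGram

lemma eq_neg_one_of_mul_rpow_eq_div_rpow {c x p : ℝ} (hc : 0 < c) (hc1 : c ≠ 1) (hx : 0 < x)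
    (h : c * x ^ p = (x / c) ^ p) : p = -1 := by
  have hcp : c ^ (p + 1) = c ^ (0 : ℝ) := by
    rw [Real.div_rpow hx.le hc.le, eq_div_iff (Real.rpow_pos_of_pos hc p).ne'] at h
    rw [Real.rpow_add_one hc.ne', Real.rpow_zero]
    refine mul_left_cancel₀ (Real.rpow_pos_of_pos hx p).ne' ?_
    linear_combination h
  linarith [(Real.rpow_right_inj hc hc1).mp hcp]

theorem stmt2_general (α : ℝ) (hα1 : α ≠ 1) (K : ℕ) (hK : 1 ≤ K) :
    ¬ (∀ (d : ℕ) (g : Fin K → EuclideanSpace ℝ (Fin d)),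
        LinearIndependent ℝ g →
        ∀ (c : Fin K → ℝ), (∀ i, 0 < c i) →
        ∀ (w : Fin K → ℝ), (∀ i, 0 < w i) →
        (∀ i, (Matrix.of fun i j => (inner ℝ (g i) (g j) : ℝ)).mulVec w i
            = w i ^ (-(1/α))) →
        (∀ i, (Matrix.of fun i j => (inner ℝ (c i • g i) (c j • g j) : ℝ)).mulVec
            (fun i => w i / c i) i = (w i / c i) ^ (-(1/α)))) := by
  intro h
  let b := EuclideanSpace.basisFun (Fin K) ℝ
  have hsol : ∀ i, (gram ℝ b *ᵥ fun _ => 1) i = (1 : ℝ) ^ (-(1/α)) := by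
    simp [gram_mulVec_of_orthonormal b.orthonormal]
  have hrescaled : (gram ℝ (fun i => (2 : ℝ) • b i) *ᵥ fun _ => 1 / 2) ⟨0, hK⟩
      = (1 / 2 : ℝ) ^ (-(1/α)) :=
    h K b b.orthonormal.linearIndependent (fun _ => 2) (fun _ => two_pos) (fun _ => 1)
      (fun _ => one_pos) hsol ⟨0, hK⟩
  rw [gram_smul_mulVec_div b (fun _ => two_ne_zero), hsol] at hrescaled
  have hexp := eq_neg_one_of_mul_rpow_eq_div_rpow two_pos (by norm_num) one_pos hrescaled
  exact hα1 (by simpa using hexp)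

theorem stmt2 (α : ℝ) (hα : 0 < α) (hα1 : α ≠ 1) (K : ℕ) (hK : 1 ≤ K) :
    ¬ (∀ (d : ℕ) (g : Fin K → EuclideanSpace ℝ (Fin d)),
        LinearIndependent ℝ g →
        ∀ (c : Fin K → ℝ), (∀ i, 0 < c i) →
        ∀ (w : Fin K → ℝ), (∀ i, 0 < w i) →
        (∀ i, (Matrix.of fun i j => (inner ℝ (g i) (g j) : ℝ)).mulVec w i
            = w i ^ (-(1/α))) →
        (∀ i, (Matrix.of fun i j => (inner ℝ (c i • g i) (c j • g j) : ℝ)).mulVec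
            (fun i => w i / c i) i = (w i / c i) ^ (-(1/α)))) :=
  stmt2_general α hα1 K hK
end

section
/- Composition of PopArt and α=1 FairGrad: let g_1,...,g_K ∈ R^d be linearly independent and let σ_1,...,σ_K > 0. Let d_raw = sum_i w_i g_i where w is the positive solution of the Gram-matrix KKT system for (g_1,...,g_K), and let d_pop = sum_i w̃_i (σ_i^{-2} g_i) where w̃ is the positive solution of the KKT system for (σ_1^{-2} g_1,...,σ_K^{-2} g_K). Then d_pop = d_raw. -/
/-!
Rescaling `g i` by `c i ≠ 0` multiplies the Gram matrix by `c` on both sides, so a solution `w`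
of `G(c • g) w = w⁻¹` yields the solution `c * w` of `G(g) v = v⁻¹`. For linearly independent
`g` this system has at most one positive solution: for two of them, `x = w - v` satisfies
`xᵀ G x = ∑ i, (w i - v i) (1 / w i - 1 / v i) ≤ 0`, while `G` is positive definite.
Hence `(σ i ^ 2)⁻¹ * wt i = w i`, which makes the two directions agree termwise.
-/

open Matrix

variable {ι E : Type*} [Fintype ι] [NormedAddCommGroup E] [InnerProductSpace ℝ E]

lemma sub_mul_inv_sub_inv_nonpos {a b : ℝ} (ha : 0 < a) (hb : 0 < b) :
    (a - b) * (a⁻¹ - b⁻¹) ≤ 0 := by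
  have : (a - b) * (a⁻¹ - b⁻¹) = -((a - b) ^ 2 / (a * b)) := by
    field_simp
    ring
  rw [this, neg_nonpos]
  positivity

theorem eq_of_gram_mulVec_eq_inv {g : ι → E} (hg : LinearIndependent ℝ g) {w v : ι → ℝ}
    (hw : ∀ i, 0 < w i) (hv : ∀ i, 0 < v i)
    (hGw : gram ℝ g *ᵥ w = w⁻¹) (hGv : gram ℝ g *ᵥ v = v⁻¹) : w = v := by
  by_contra hne
  have hpos : 0 < (w - v) ⬝ᵥ gram ℝ g *ᵥ (w - v) :=
    (posDef_gram_of_linearIndependent hg).dotProduct_mulVec_pos (sub_ne_zero.mpr hne)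
  have hnonpos : (w - v) ⬝ᵥ gram ℝ g *ᵥ (w - v) ≤ 0 := by
    rw [mulVec_sub, hGw, hGv]
    exact Finset.sum_nonpos fun i _ => sub_mul_inv_sub_inv_nonpos (hw i) (hv i)
  exact hnonpos.not_gt hpos

lemma gram_smul_mulVec (g : ι → E) (c w : ι → ℝ) :
    gram ℝ (c • g) *ᵥ w = c * (gram ℝ g *ᵥ (c * w)) := by
  ext i
  simp only [mulVec, dotProduct, gram_apply, Pi.smul_apply', Pi.mul_apply, real_inner_smul_left,
    real_inner_smul_right, Finset.mul_sum]
  exact Finset.sum_congr rfl fun j _ => by ring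

theorem gram_smul_mulVec_eq_inv_iff (g : ι → E) {c : ι → ℝ} (hc : ∀ i, c i ≠ 0) (w : ι → ℝ) :
    gram ℝ (c • g) *ᵥ w = w⁻¹ ↔ gram ℝ g *ᵥ (c * w) = (c * w)⁻¹ := by
  rw [gram_smul_mulVec, funext_iff, funext_iff]
  refine forall_congr' fun i => ?_
  simp only [Pi.mul_apply, Pi.inv_apply, mul_inv]
  rw [← eq_inv_mul_iff_mul_eq₀ (hc i)]

theorem stmt14 {d K : ℕ} (g : Fin K → EuclideanSpace ℝ (Fin d))
    (hg : LinearIndependent ℝ g)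
    (σ : Fin K → ℝ) (hσ : ∀ i, 0 < σ i)
    (w : Fin K → ℝ) (hw : ∀ i, 0 < w i)
    (hKKT : ∀ i, (Matrix.of fun i j => (inner ℝ (g i) (g j) : ℝ)).mulVec w i = (w i)⁻¹)
    (wt : Fin K → ℝ) (hwt : ∀ i, 0 < wt i)
    (hKKTt : ∀ i, (Matrix.of fun i j =>
        (inner ℝ ((σ i ^ 2)⁻¹ • g i) ((σ j ^ 2)⁻¹ • g j) : ℝ)).mulVec wt i = (wt i)⁻¹) :
    ∑ i, wt i • (σ i ^ 2)⁻¹ • g i = ∑ i, w i • g i := by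
  set c : Fin K → ℝ := fun i => (σ i ^ 2)⁻¹
  have hc : ∀ i, 0 < c i := fun i => by have := hσ i; positivity
  have hraw : gram ℝ g *ᵥ w = w⁻¹ := funext hKKT
  have hpop : gram ℝ g *ᵥ (c * wt) = (c * wt)⁻¹ :=
    (gram_smul_mulVec_eq_inv_iff g (fun i => (hc i).ne') wt).mp (funext hKKTt)
  have hweights : c * wt = w :=
    eq_of_gram_mulVec_eq_inv hg (fun i => mul_pos (hc i) (hwt i)) hw hpop hraw
  rw [← hweights]
  exact Finset.sum_congr rfl fun i _ => by rw [smul_smul, Pi.mul_apply, mul_comm]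
end
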